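/- arXiv:2005.05863 — 2 statements merged into one kernel-verified Lean document; each statement's English description precedes it below -/
import Mathlib

section
/- Let T be a tree on n ≥ 1 vertices rooted at r, let f be a DFS-mapping of (T, r), and let v be a vertex of T. Let i be the least index with f(i) = v and j the largest index with f(j) = v. Then for every k with i ≤ k ≤ j, the vertex v lies on the unique path in T from f(k) to r (i.e., f(k) is v itself or a descendant of v). -/
/-- `c` is a child of `v` in the tree `T` rooted at `r`. -/
def IsChild {V : Type*} (T : SimpleGraph V) (r v c : V) : Prop :=
  T.Adj v c ∧ T.dist c r = T.dist v r + 1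

/-- `p` is the parent of `v` in the tree `T` rooted at `r`. -/
def IsParent {V : Type*} (T : SimpleGraph V) (r v p : V) : Prop :=
  T.Adj v p ∧ T.dist p r + 1 = T.dist v r

/-- `f` (with `f ⟨0,_⟩` playing the role of `f(1)`) is a DFS-mapping of the tree `T`
rooted at `r`. -/
def IsDFSMapping {V : Type*} (T : SimpleGraph V) (r : V) {m : ℕ} (f : Fin m → V) : Prop :=
  (∀ h : 0 < m, f ⟨0, h⟩ = r) ∧
  ∀ i : Fin m, ∀ h : (i : ℕ) + 1 < m,
    ((∃ c, IsChild T r (f i) c ∧ ∀ j : Fin m, j < i → f j ≠ c) →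
      (IsChild T r (f i) (f ⟨(i : ℕ) + 1, h⟩) ∧
        ∀ j : Fin m, j < i → f j ≠ f ⟨(i : ℕ) + 1, h⟩)) ∧
    ((¬ ∃ c, IsChild T r (f i) c ∧ ∀ j : Fin m, j < i → f j ≠ c) →
      IsParent T r (f i) (f ⟨(i : ℕ) + 1, h⟩))



open SimpleGraph

lemma dist_adj_le {V : Type*} {T : SimpleGraph V} {a b : V} (h : T.Adj a b) :
    T.dist a b ≤ 1 := by
  simpa using SimpleGraph.dist_le (Walk.cons h Walk.nil)

lemma unique_parent {V : Type*} {T : SimpleGraph V} (hT : T.IsTree) {r a b c : V}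
    (hab : T.Adj a b) (hac : T.Adj a c)
    (hb : T.dist b r + 1 = T.dist a r) (hc : T.dist c r + 1 = T.dist a r) : b = c := by
  obtain ⟨pb, hpb⟩ := hT.isConnected.exists_walk_length_eq_dist b r
  obtain ⟨pc, hpc⟩ := hT.isConnected.exists_walk_length_eq_dist c r
  have hpbp := pb.isPath_of_length_eq_dist hpb
  have hpcp := pc.isPath_of_length_eq_dist hpc
  have hna : ∀ (x : V) (p : T.Walk x r), p.length = T.dist x r →
      T.dist x r + 1 = T.dist a r → a ∉ p.support := by
    intro x p hp hx hmem
    obtain ⟨q, s, rfl⟩ := Walk.mem_support_iff_exists_append.mp hmem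
    have h1 : T.dist a r ≤ s.length := SimpleGraph.dist_le s
    have h2 : q.length + s.length = T.dist x r := by
      simpa [Walk.length_append] using hp
    omega
  have wb : (Walk.cons hab pb).IsPath := hpbp.cons (hna b pb hpb hb)
  have wc : (Walk.cons hac pc).IsPath := hpcp.cons (hna c pc hpc hc)
  have := (hT.existsUnique_path a r).unique wb wc
  have hs := congrArg Walk.support this
  rw [Walk.support_cons, Walk.support_cons, pb.support_eq_cons, pc.support_eq_cons] at hs
  simp only [List.cons.injEq] at hs; exact hs.2.1

/-- A child of a descendant of `v` is a descendant of `v`. -/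
lemma child_in_S {V : Type*} {T : SimpleGraph V} (hc : T.Connected) {r v a b : V}
    (hab : T.Adj a b) (hb : T.dist b r = T.dist a r + 1)
    (ha : T.dist a r = T.dist a v + T.dist v r) :
    T.dist b r = T.dist b v + T.dist v r := by
  have tri : T.dist b r ≤ T.dist b v + T.dist v r := hc.dist_triangle
  have h1 : T.dist b v ≤ T.dist b a + T.dist a v := hc.dist_triangle
  have h2 : T.dist b a ≤ 1 := dist_adj_le hab.symm
  omega

/-- The parent of a descendant `a ≠ v` of `v` is a descendant of `v`. -/
lemma parent_in_S {V : Type*} {T : SimpleGraph V} (hT : T.IsTree) {r v a b : V}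
    (hab : T.Adj a b) (hb : T.dist b r + 1 = T.dist a r)
    (ha : T.dist a r = T.dist a v + T.dist v r) (hav : a ≠ v) :
    T.dist b r = T.dist b v + T.dist v r := by
  have hc := hT.isConnected
  have hpos : 0 < T.dist a v := hc.pos_dist_of_ne hav
  obtain ⟨P, hP⟩ := hc.exists_walk_length_eq_dist a v
  cases P with
  | nil => simp at hP; omega
  | @cons _ u _ hau P' =>
    rw [Walk.length_cons] at hP
    have huv1 : T.dist u v ≤ P'.length := SimpleGraph.dist_le P'
    have huv2 : T.dist a v ≤ T.dist a u + T.dist u v := hc.dist_triangle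
    have hau1 : T.dist a u ≤ 1 := dist_adj_le hau
    have huv : T.dist u v + 1 = T.dist a v := by omega
    have hur1 : T.dist u r ≤ T.dist u v + T.dist v r := hc.dist_triangle
    have hur2 : T.dist a r ≤ T.dist a u + T.dist u r := hc.dist_triangle
    have hur : T.dist u r + 1 = T.dist a r := by omega
    have hbu : b = u := unique_parent hT hab hau hb hur
    subst hbu
    omega

/-- Between the first and last visit of `v`, a DFS-mapping only visits `v` and its
descendants: `v` lies on the unique (shortest) path from `f k` to the root. -/
theorem dfs_mapping_between_visits {V : Type*} [Fintype V] (n : ℕ) (hn : 1 ≤ n)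
    (hcard : Fintype.card V = n) (T : SimpleGraph V) (hT : T.IsTree) (r : V)
    (f : Fin (2 * n - 1) → V) (hf : IsDFSMapping T r f) (v : V)
    (i j : Fin (2 * n - 1)) (hfi : f i = v) (hleast : ∀ k, f k = v → i ≤ k)
    (hfj : f j = v) (hlargest : ∀ k, f k = v → k ≤ j) :
    ∀ k : Fin (2 * n - 1), i ≤ k → k ≤ j →
      T.dist (f k) r = T.dist (f k) v + T.dist v r := by
  have hc := hT.isConnected
  have hvS : T.dist v r = T.dist v v + T.dist v r := by simp [SimpleGraph.dist_self]
  have noret : ∀ t : ℕ, ∀ s : Fin (2 * n - 1), (i : ℕ) < (s : ℕ) →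
      ¬ T.dist (f s) r = T.dist (f s) v + T.dist v r →
      ∀ ht : (s : ℕ) + t < 2 * n - 1,
        ¬ T.dist (f ⟨(s : ℕ) + t, ht⟩) r = T.dist (f ⟨(s : ℕ) + t, ht⟩) v + T.dist v r := by
    intro t
    induction t with
    | zero => intro s hs hS ht; exact hS
    | succ t ih =>
      intro s hs hS ht
      have htm : (s : ℕ) + t < 2 * n - 1 := by omega
      set m : Fin (2 * n - 1) := ⟨(s : ℕ) + t, htm⟩ with hm
      have ihm := ih s hs hS htm
      have hnext : ((m : ℕ) + 1) < 2 * n - 1 := ht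
      have hstep := hf.2 m hnext
      show ¬ T.dist (f ⟨(m : ℕ) + 1, hnext⟩) r = T.dist (f ⟨(m : ℕ) + 1, hnext⟩) v + T.dist v r
      by_cases hex : ∃ c, IsChild T r (f m) c ∧ ∀ j : Fin (2 * n - 1), j < m → f j ≠ c
      · obtain ⟨hch, hnew⟩ := hstep.1 hex
        intro hS'
        have hne : f ⟨(m : ℕ) + 1, hnext⟩ ≠ v := by
          intro hv
          have hilt : i < m := by rw [Fin.lt_def]; simp only [hm]; omega
          exact hnew i hilt (by rw [hfi, hv])
        exact ihm (parent_in_S hT hch.1.symm hch.2.symm hS' hne)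
      · have hp := hstep.2 hex
        intro hS'
        exact ihm (child_in_S hc hp.1.symm hp.2.symm hS')
  have main : ∀ t : ℕ, ∀ ht : (i : ℕ) + t < 2 * n - 1, (i : ℕ) + t ≤ (j : ℕ) →
      T.dist (f ⟨(i : ℕ) + t, ht⟩) r = T.dist (f ⟨(i : ℕ) + t, ht⟩) v + T.dist v r := by
    intro t
    induction t with
    | zero =>
      intro ht _
      have hi0 : (⟨(i : ℕ) + 0, ht⟩ : Fin (2 * n - 1)) = i := by ext; simp
      rw [hi0, hfi]; exact hvS
    | succ t ih =>
      intro ht hle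
      have htm : (i : ℕ) + t < 2 * n - 1 := by omega
      set k : Fin (2 * n - 1) := ⟨(i : ℕ) + t, htm⟩ with hk
      have hkS := ih htm (by omega)
      have hnext : ((k : ℕ) + 1) < 2 * n - 1 := ht
      have hstep := hf.2 k hnext
      show T.dist (f ⟨(k : ℕ) + 1, hnext⟩) r = T.dist (f ⟨(k : ℕ) + 1, hnext⟩) v + T.dist v r
      by_cases hex : ∃ c, IsChild T r (f k) c ∧ ∀ j : Fin (2 * n - 1), j < k → f j ≠ c
      · obtain ⟨hch, _⟩ := hstep.1 hex
        exact child_in_S hc hch.1 hch.2 hkS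
      · have hp := hstep.2 hex
        by_cases hkv : f k = v
        · exfalso
          have hpS : ¬ T.dist (f ⟨(k : ℕ) + 1, hnext⟩) r =
              T.dist (f ⟨(k : ℕ) + 1, hnext⟩) v + T.dist v r := by
            intro hS'
            have h1 : T.dist (f ⟨(k : ℕ) + 1, hnext⟩) r + 1 = T.dist v r := by
              rw [← hkv]; exact hp.2
            omega
          set s : Fin (2 * n - 1) := ⟨(k : ℕ) + 1, hnext⟩ with hs
          have hjM : (s : ℕ) + ((j : ℕ) - (s : ℕ)) < 2 * n - 1 := by
            have := j.isLt; omega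
          have hcon := noret ((j : ℕ) - (s : ℕ)) s (by simp only [hs, hk]; omega) hpS hjM
          have hj' : (⟨(s : ℕ) + ((j : ℕ) - (s : ℕ)), hjM⟩ : Fin (2 * n - 1)) = j := by
            ext; simp only [hs, hk]; omega
          rw [hj', hfj] at hcon
          exact hcon hvS
        · exact parent_in_S hT hp.1 hp.2 hkS hkv
  intro k hik hkj
  have hik' : (i : ℕ) ≤ (k : ℕ) := hik
  have hkj' : (k : ℕ) ≤ (j : ℕ) := hkj
  have htM : (i : ℕ) + ((k : ℕ) - (i : ℕ)) < 2 * n - 1 := by have := k.isLt; omega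
  have := main ((k : ℕ) - (i : ℕ)) htM (by omega)
  have hk' : (⟨(i : ℕ) + ((k : ℕ) - (i : ℕ)), htM⟩ : Fin (2 * n - 1)) = k := by ext; simp; omega
  rwa [hk'] at this
end

section
/- Let T be a tree on n ≥ 1 vertices rooted at r and let f be a DFS-mapping of (T, r). Define the simple graph G_f on vertex set {1, …, 2n−1} whose edges are exactly: {i, i+1} for every 1 ≤ i < 2n−1, and {i, j} for every pair i < j such that f(i) = f(j) and f(k) ≠ f(i) for every k with i < k < j. Then G_f is path-outerplanar with witness the natural order on {1, …, 2n−1}. -/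
/-- `G` on `Fin N` is path-outerplanar with witness the natural order. -/
def IsPathOuterplanarWitness {N : ℕ} (G : SimpleGraph (Fin N)) : Prop :=
  (∀ i : Fin N, ∀ h : (i : ℕ) + 1 < N, G.Adj i ⟨(i : ℕ) + 1, h⟩) ∧
  (∀ a b c d : Fin N, G.Adj a b → G.Adj c d → a < b → c < d →
    (b ≤ c) ∨ (d ≤ a) ∨ (a ≤ c ∧ d ≤ b) ∨ (c ≤ a ∧ b ≤ d))


/-!
Write `d(x)` for the distance from `x` to the root. Once a DFS leaves a vertex `v` towards its
parent it never comes back to `v`, so between two visits of `v` the walk stays in the subtree of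
`v`: every vertex visited strictly between them is deeper than `v`. A non-path edge `{a, b}` of
`G_f` joins two consecutive visits of one vertex. If it crossed another non-path edge `{c, d}`,
`a < c < b < d`, then `f c ≠ f a` would give `d(f a) < d(f c)` and, with `f b = f a ≠ f c`,
`d(f c) < d(f b) = d(f a)`.
-/

@[elab_as_elim]
theorem Fin.le_induction {m : ℕ} {a : Fin m} {P : ∀ b : Fin m, a ≤ b → Prop}
    (base : P a le_rfl)
    (succ : ∀ (k : Fin m) (h : (k : ℕ) + 1 < m) (hak : a ≤ k),
      P k hak → P ⟨k + 1, h⟩ (hak.trans (Fin.le_def.2 (Nat.le_succ _))))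
    (b : Fin m) (hab : a ≤ b) : P b hab := by
  obtain ⟨b, hb⟩ := b
  induction b with
  | zero =>
    obtain rfl : a = ⟨0, hb⟩ := Fin.ext (Nat.le_zero.1 (Fin.le_def.1 hab))
    exact base
  | succ b ih =>
    rcases eq_or_lt_of_le hab with rfl | hlt
    · exact base
    · have hak : a ≤ ⟨b, by omega⟩ := Fin.le_def.2 (Nat.le_of_lt_succ (Fin.lt_def.1 hlt))
      exact succ _ hb hak (ih (by omega) hak)

namespace SimpleGraph

variable {V : Type*} {G : SimpleGraph V}

lemma IsAcyclic.support_subset_of_isPath (hG : G.IsAcyclic) {u v : V} {p : G.Walk u v}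
    (hp : p.IsPath) (q : G.Walk u v) : p.support ⊆ q.support := by
  classical
  obtain rfl : p = q.bypass :=
    congrArg Subtype.val ((hG.subsingleton_path u v).elim ⟨p, hp⟩ ⟨_, q.bypass_isPath⟩)
  exact q.support_bypass_subset_support

lemma IsAcyclic.length_eq_dist_of_isPath (hG : G.IsAcyclic) {u v : V} {p : G.Walk u v}
    (hp : p.IsPath) : p.length = G.dist u v := by
  obtain ⟨q, hq, hlen⟩ := p.reachable.exists_path_of_dist
  obtain rfl : p = q :=
    congrArg Subtype.val ((hG.subsingleton_path u v).elim ⟨p, hp⟩ ⟨q, hq⟩)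
  exact hlen

lemma IsAcyclic.mem_support_of_adj_of_adj (hG : G.IsAcyclic) {u v w : V} (huv : G.Adj u v)
    (hvw : G.Adj v w) (huw : u ≠ w) (p : G.Walk u w) : v ∈ p.support := by
  have hpath : (Walk.cons huv (Walk.cons hvw Walk.nil)).IsPath := by
    simp [Walk.isPath_def, huv.ne, hvw.ne, huw]
  exact hG.support_subset_of_isPath hpath p (by simp)

/-- In a tree rooted at `r`, this says that `x` lies in the subtree of `v`. -/
def IsDescendant (G : SimpleGraph V) (r v x : V) : Prop :=
  ∀ w : G.Walk x r, v ∈ w.support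

lemma IsDescendant.of_adj {r v x y : V} (h : G.IsDescendant r v x) (hx : x ≠ v)
    (hxy : G.Adj x y) : G.IsDescendant r v y := fun w =>
  (List.mem_cons.1 (h (Walk.cons hxy w))).resolve_left hx.symm

lemma IsDescendant.dist_lt {r v x : V} (h : G.IsDescendant r v x) (hr : G.Reachable x r)
    (hx : x ≠ v) : G.dist v r < G.dist x r := by
  classical
  obtain ⟨p, hp⟩ := hr.exists_walk_length_eq_dist
  have hv := h p
  have hsplit := congrArg Walk.length (p.take_spec hv)
  rw [Walk.length_append] at hsplit
  have h1 := (p.takeUntil v hv).reachable.pos_dist_of_ne hx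
  have h2 := dist_le (p.takeUntil v hv)
  have h3 := dist_le (p.dropUntil v hv)
  omega

lemma IsAcyclic.isDescendant_of_isChild (hG : G.IsAcyclic) {r x c : V} (hc : IsChild G r x c) :
    G.IsDescendant r x c := by
  classical
  intro w
  by_contra hx
  have hq : x ∉ w.bypass.support := fun h => hx (w.support_bypass_subset_support h)
  have hlen := hG.length_eq_dist_of_isPath (w.bypass_isPath.cons hq (h := hc.1))
  have hle := dist_le w.bypass
  rw [Walk.length_cons] at hlen
  have := hc.2
  omega

end SimpleGraph

namespace IsDFSMapping

variable {V : Type*} {T : SimpleGraph V} {r : V} {m : ℕ} {f : Fin m → V}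

lemma isChild_or_isParent (hf : IsDFSMapping T r f) (i : Fin m) (h : (i : ℕ) + 1 < m) :
    IsChild T r (f i) (f ⟨i + 1, h⟩) ∨ IsParent T r (f i) (f ⟨i + 1, h⟩) := by
  by_cases hc : ∃ c, IsChild T r (f i) c ∧ ∀ j : Fin m, j < i → f j ≠ c
  · exact .inl ((hf.2 i h).1 hc).1
  · exact .inr ((hf.2 i h).2 hc)

lemma adj_succ (hf : IsDFSMapping T r f) (i : Fin m) (h : (i : ℕ) + 1 < m) :
    T.Adj (f i) (f ⟨i + 1, h⟩) :=
  (hf.isChild_or_isParent i h).elim (·.1) (·.1)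

lemma exists_walk_support_subset (hf : IsDFSMapping T r f) {a b : Fin m} (hab : a ≤ b) :
    ∃ w : T.Walk (f a) (f b), ∀ x ∈ w.support, ∃ t, a ≤ t ∧ t ≤ b ∧ f t = x := by
  induction b, hab using Fin.le_induction with
  | base => exact ⟨.nil, fun x hx => ⟨a, le_rfl, le_rfl, (List.mem_singleton.1 hx).symm⟩⟩
  | succ k h hak ih =>
    obtain ⟨w, hw⟩ := ih
    refine ⟨w.concat (hf.adj_succ k h), fun x hx => ?_⟩
    have hk : k ≤ ⟨k + 1, h⟩ := Fin.le_def.2 (Nat.le_succ _)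
    rw [SimpleGraph.Walk.support_concat, List.mem_append, List.mem_singleton] at hx
    rcases hx with hx | rfl
    · obtain ⟨t, hat, htk, rfl⟩ := hw x hx
      exact ⟨t, hat, htk.trans hk, rfl⟩
    · exact ⟨_, hak.trans hk, le_rfl, rfl⟩

lemma ne_of_isParent (hT : T.IsAcyclic) (hf : IsDFSMapping T r f) {i : Fin m}
    (h : (i : ℕ) + 1 < m) (hp : IsParent T r (f i) (f ⟨i + 1, h⟩)) (k : Fin m) (hik : i < k) :
    f k ≠ f i := by
  induction k using WellFoundedLT.induction with
  | _ k ih =>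
  intro hk
  obtain ⟨j, hj, rfl⟩ : ∃ j : Fin m, ∃ hj : (j : ℕ) + 1 < m, k = ⟨j + 1, hj⟩ :=
    ⟨⟨k - 1, by omega⟩, by simp; omega, Fin.ext (by simp; omega)⟩
  rcases eq_or_lt_of_le (Fin.le_def.2 (Nat.le_of_lt_succ hik) : i ≤ j) with rfl | hij
  · exact hp.1.ne hk.symm
  by_cases hc : ∃ c, IsChild T r (f j) c ∧ ∀ j' : Fin m, j' < j → f j' ≠ c
  · exact ((hf.2 j hj).1 hc).2 i hij hk.symm
  -- The DFS walk from the parent of `f i` back to a child of `f i` must pass through `f i`.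
  have hjp : IsParent T r (f j) (f i) := hk ▸ (hf.2 j hj).2 hc
  have hne : f ⟨i + 1, h⟩ ≠ f j := fun heq => by
    have h₁ := hp.2
    have h₂ := hjp.2
    rw [heq] at h₁
    omega
  obtain ⟨w, hw⟩ := hf.exists_walk_support_subset (a := ⟨i + 1, h⟩) (b := j)
    (Fin.le_def.2 (Nat.succ_le_of_lt hij))
  obtain ⟨t, hit, htj, hft⟩ :=
    hw _ (hT.mem_support_of_adj_of_adj hp.1.symm hjp.1.symm hne w)
  exact ih t (lt_of_le_of_lt htj (Fin.lt_def.2 (Nat.lt_succ_self _)))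
    (lt_of_lt_of_le (Fin.lt_def.2 (Nat.lt_succ_self _)) hit) hft

lemma isDescendant (hT : T.IsAcyclic) (hf : IsDFSMapping T r f) {a b k : Fin m}
    (hab : f a = f b) (hak : a ≤ k) (hkb : k ≤ b) : T.IsDescendant r (f a) (f k) := by
  induction k, hak using Fin.le_induction with
  | base => exact fun w => w.start_mem_support
  | succ k h hak ih =>
    have hkb' : k < b := lt_of_lt_of_le (Fin.lt_def.2 (Nat.lt_succ_self _)) hkb
    by_cases hka : f k = f a
    · rcases hf.isChild_or_isParent k h with hc | hp
      · exact hka ▸ hT.isDescendant_of_isChild hc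
      · exact absurd (hab.symm.trans hka.symm) (hf.ne_of_isParent hT h hp b hkb')
    · exact (ih hkb'.le).of_adj hka (hf.adj_succ k h)

lemma dist_lt_dist (hT : T.IsTree) (hf : IsDFSMapping T r f) {a b k : Fin m}
    (hab : f a = f b) (hak : a ≤ k) (hkb : k ≤ b) (hk : f k ≠ f a) :
    T.dist (f a) r < T.dist (f k) r :=
  (hf.isDescendant hT.isAcyclic hab hak hkb).dist_lt (hT.connected.preconnected _ _) hk

lemma eq_of_interleaved (hT : T.IsTree) (hf : IsDFSMapping T r f) {a b c d : Fin m}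
    (hab : f a = f b) (hcd : f c = f d) (hac : a ≤ c) (hcb : c ≤ b) (hbd : b ≤ d) :
    f c = f a := by
  by_contra hca
  have h₁ := hf.dist_lt_dist hT hab hac hcb hca
  have h₂ := hf.dist_lt_dist hT hcd hcb hbd (hab ▸ Ne.symm hca)
  rw [← hab] at h₂
  omega

end IsDFSMapping

lemma isPathOuterplanarWitness_fromRel {N : ℕ} {R : Fin N → Fin N → Prop}
    (hlt : ∀ i j, R i j → i < j)
    (hsucc : ∀ (i : Fin N) (h : (i : ℕ) + 1 < N), R i ⟨i + 1, h⟩)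
    (hcross : ∀ a b c d, R a b → R c d → a < c → c < b → ¬ b < d) :
    IsPathOuterplanarWitness (SimpleGraph.fromRel R) := by
  have hR : ∀ {a b}, (SimpleGraph.fromRel R).Adj a b → a < b → R a b := fun hab hab' =>
    ((SimpleGraph.fromRel_adj _ _ _).1 hab).2.resolve_right
      fun h => (hlt _ _ h).not_gt hab'
  refine ⟨fun i h => (SimpleGraph.fromRel_adj _ _ _).2
    ⟨(hlt _ _ (hsucc i h)).ne, .inl (hsucc i h)⟩, fun a b c d hab hcd hab' hcd' => ?_⟩
  replace hab := hR hab hab'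
  replace hcd := hR hcd hcd'
  rcases le_or_gt b c with h | hcb
  · exact .inl h
  rcases le_or_gt d a with h | had
  · exact .inr (.inl h)
  rcases lt_trichotomy a c with hac | rfl | hca
  · exact .inr (.inr (.inl ⟨hac.le, not_lt.1 (hcross _ _ _ _ hab hcd hac hcb)⟩))
  · exact (le_total d b).elim (fun h => .inr (.inr (.inl ⟨le_rfl, h⟩)))
      (fun h => .inr (.inr (.inr ⟨le_rfl, h⟩)))
  · exact .inr (.inr (.inr ⟨hca.le, not_lt.1 (hcross _ _ _ _ hcd hab hca had)⟩))

theorem dfs_graph_path_outerplanar_general {V : Type*} (n : ℕ) (T : SimpleGraph V) (hT : T.IsTree) (r : V)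
    (f : Fin (2 * n - 1) → V) (hf : IsDFSMapping T r f) :
    IsPathOuterplanarWitness (SimpleGraph.fromRel
      (fun i j : Fin (2 * n - 1) =>
        ((i : ℕ) + 1 = (j : ℕ)) ∨
        (i < j ∧ f i = f j ∧ ∀ k : Fin (2 * n - 1), i < k → k < j → f k ≠ f i))) := by
  refine isPathOuterplanarWitness_fromRel ?_ (fun i h => .inl rfl) ?_
  · rintro i j (h | ⟨h, -⟩)
    · exact Fin.lt_def.2 (by omega)
    · exact h
  · rintro a b c d (hab | ⟨-, hab, hmin⟩) (hcd | ⟨-, hcd, -⟩) hac hcb hbd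
    iterate 3 · rw [Fin.lt_def] at hac hcb hbd; omega
    exact hmin c hac hcb (hf.eq_of_interleaved hT hab hcd hac.le hcb.le hbd.le)

/-- The graph `G_f` associated with a DFS-mapping `f` (consecutive indices, plus
pairs of consecutive visits of the same vertex) is path-outerplanar with witness
the natural order. -/
theorem dfs_graph_path_outerplanar {V : Type*} [Fintype V] (n : ℕ) (hn : 1 ≤ n)
    (hcard : Fintype.card V = n) (T : SimpleGraph V) (hT : T.IsTree) (r : V)
    (f : Fin (2 * n - 1) → V) (hf : IsDFSMapping T r f) :
    IsPathOuterplanarWitness (SimpleGraph.fromRel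
      (fun i j : Fin (2 * n - 1) =>
        ((i : ℕ) + 1 = (j : ℕ)) ∨
        (i < j ∧ f i = f j ∧ ∀ k : Fin (2 * n - 1), i < k → k < j → f k ≠ f i))) :=
  dfs_graph_path_outerplanar_general n T hT r f hf
end
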